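/- Let F₀ : ℂ² → ℂ⁵ be the complexified standard open umbrella F₀(u,v) = (u, v², u·v³, v³, (3/2)·u·v). Let H be a ℂ-analytic (holomorphic) function defined on an open neighborhood of 0 in ℂ⁵ with values in ℂ, such that H ∘ F₀ vanishes on some neighborhood of 0 in ℂ² and the complex derivative DH(0) : ℂ⁵ → ℂ is nonzero. Then the kernel of DH(0) equals the complexified contact hyperplane {w ∈ ℂ⁵ : w₃ = 0}; equivalently, there is a nonzero constant C ∈ ℂ with DH(0)·w = C·w₃ for all w ∈ ℂ⁵. -/

import Mathlib

noncomputable section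

open scoped Topology
open Filter

/-- `ℂ⁵` with coordinates `(x, y, z, p, q)`. -/
abbrev C5 := ℂ × ℂ × ℂ × ℂ × ℂ

/-- The complexified standard open umbrella `F₀(u,v) = (u, v², uv³, v³, (3/2)uv)`. -/
def F0 : ℂ × ℂ → C5 :=
  fun a => (a.1, a.2 ^ 2, a.1 * a.2 ^ 3, a.2 ^ 3, (3 / 2) * a.1 * a.2)

/-- The open umbrella is formally full: any holomorphic function vanishing on it with
nonzero differential at 0 cuts out the complexified contact hyperplane `{w₃ = 0}`. -/
theorem stmt13 (V : Set C5) (hV : IsOpen V) (h0V : (0 : C5) ∈ V)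
    (H : C5 → ℂ) (hH : AnalyticOnNhd ℂ H V)
    (hvan : ∃ s ∈ nhds (0 : ℂ × ℂ), ∀ a ∈ s, H (F0 a) = 0)
    (hne : fderiv ℂ H 0 ≠ 0) :
    {w : C5 | fderiv ℂ H 0 w = 0} = {w : C5 | w.2.2.1 = 0} ∧
    ∃ C : ℂ, C ≠ 0 ∧ ∀ w : C5, fderiv ℂ H 0 w = C * w.2.2.1 := by
  obtain ⟨s, hs, hvans⟩ := hvan
  have hD : AnalyticOnNhd ℂ (fderiv ℂ H) V := hH.fderiv
  set e2 : C5 := (0, 1, 0, 0, 0) with he2def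
  set e4 : C5 := (0, 0, 0, 1, 0) with he4def
  set e5 : C5 := (0, 0, 0, 0, 1) with he5def
  -- shrink to a ball where both vanishing and membership in V hold
  have hpre : F0 ⁻¹' V ∈ 𝓝 (0 : ℂ × ℂ) := by
    have hc : Continuous F0 := by unfold F0; fun_prop
    have h0 : F0 0 = 0 := by simp [F0]
    exact hc.continuousAt.preimage_mem_nhds (by rw [h0]; exact hV.mem_nhds h0V)
  obtain ⟨ε, hε, hball⟩ := Metric.mem_nhds_iff.1 (Filter.inter_mem hs hpre)
  have key : ∀ u v : ℂ, ‖u‖ < ε → ‖v‖ < ε →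
      H (F0 (u, v)) = 0 ∧ F0 (u, v) ∈ V := by
    intro u v hu hv
    have hm : (u, v) ∈ Metric.ball (0 : ℂ × ℂ) ε := by
      rw [mem_ball_zero_iff, Prod.norm_def]
      exact max_lt hu hv
    exact ⟨hvans _ (hball hm).1, (hball hm).2⟩
  have hε0 : ‖(0:ℂ)‖ < ε := by simpa using hε
  -- the point (0,0,0,0,0)
  have hpt0 : (((0:ℂ), (0:ℂ)^2, (0:ℂ), (0:ℂ)^3, (0:ℂ)) : C5) = 0 := by norm_num
  have hHd0 : HasFDerivAt H (fderiv ℂ H 0) 0 := (hH 0 h0V).differentiableAt.hasFDerivAt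
  -- Step a :  L e₁ = 0
  have ha : fderiv ℂ H 0 ((1,0,0,0,0) : C5) = 0 := by
    have hcurve : HasDerivAt (fun t : ℂ => ((t, 0, 0, 0, 0) : C5)) ((1,0,0,0,0) : C5) 0 :=
      (hasDerivAt_id 0).prodMk ((hasDerivAt_const _ _).prodMk ((hasDerivAt_const _ _).prodMk
        ((hasDerivAt_const _ _).prodMk (hasDerivAt_const _ _))))
    have h1 : HasDerivAt (fun t : ℂ => H (t, 0, 0, 0, 0)) (fderiv ℂ H 0 ((1,0,0,0,0) : C5)) 0 :=
      hHd0.comp_hasDerivAt 0 hcurve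
    have h2 : HasDerivAt (fun t : ℂ => H (t, 0, 0, 0, 0)) 0 0 := by
      apply (hasDerivAt_const (0:ℂ) (0:ℂ)).congr_of_eventuallyEq
      filter_upwards [Metric.ball_mem_nhds (0:ℂ) hε] with t ht
      have := (key t 0 (mem_ball_zero_iff.1 ht) hε0).1
      simpa [F0] using this
    exact h1.unique h2
  -- Step e :  L e₅ = 0
  have he5 : fderiv ℂ H 0 e5 = 0 := by
    have hvanish : ∀ u : ℂ, ‖u‖ < ε → u ≠ 0 → fderiv ℂ H (u,0,0,0,0) e5 = 0 := by
      intro u hu hu0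
      have hw : ((u,0,0,0,0) : C5) ∈ V := by
        have := (key u 0 hu hε0).2
        simpa [F0] using this
      have hHw : HasFDerivAt H (fderiv ℂ H (u,0,0,0,0)) ((u,0,0,0,0) : C5) :=
        (hH _ hw).differentiableAt.hasFDerivAt
      have hptu : ((u, (0:ℂ)^2, u*(0:ℂ)^3, (0:ℂ)^3, 3/2*u*(0:ℂ)) : C5) = (u,0,0,0,0) := by
        norm_num
      have hHw2 : HasFDerivAt H (fderiv ℂ H (u,0,0,0,0))
          ((u, (0:ℂ)^2, u*(0:ℂ)^3, (0:ℂ)^3, 3/2*u*(0:ℂ)) : C5) := by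
        rw [hptu]; exact hHw
      have c2 : HasDerivAt (fun v : ℂ => v^2) 0 0 := by simpa using hasDerivAt_pow 2 (0:ℂ)
      have c3 : HasDerivAt (fun v : ℂ => v^3) 0 0 := by simpa using hasDerivAt_pow 3 (0:ℂ)
      have cz : HasDerivAt (fun v : ℂ => u*v^3) 0 0 := by simpa using c3.const_mul u
      have cq : HasDerivAt (fun v : ℂ => 3/2*u*v) (3/2*u) 0 := by
        simpa using (hasDerivAt_id (0:ℂ)).const_mul (3/2*u)
      have hc : HasDerivAt (fun v : ℂ => ((u, v^2, u*v^3, v^3, 3/2*u*v) : C5))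
          ((0, 0, 0, 0, 3/2*u) : C5) 0 :=
        (hasDerivAt_const _ _).prodMk (c2.prodMk (cz.prodMk (c3.prodMk cq)))
      have h1 : HasDerivAt (fun v : ℂ => H (u, v^2, u*v^3, v^3, 3/2*u*v))
          (fderiv ℂ H (u,0,0,0,0) ((0, 0, 0, 0, 3/2*u) : C5)) 0 :=
        hHw2.comp_hasDerivAt 0 hc
      have h2 : HasDerivAt (fun v : ℂ => H (u, v^2, u*v^3, v^3, 3/2*u*v)) 0 0 := by
        apply (hasDerivAt_const (0:ℂ) (0:ℂ)).congr_of_eventuallyEq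
        filter_upwards [Metric.ball_mem_nhds (0:ℂ) hε] with v hv
        have := (key u v hu (mem_ball_zero_iff.1 hv)).1
        simpa [F0] using this
      have h3 : fderiv ℂ H (u,0,0,0,0) ((0, 0, 0, 0, 3/2*u) : C5) = 0 := h1.unique h2
      have hsm : ((0, 0, 0, 0, 3/2*u) : C5) = (3/2*u) • e5 := by
        simp [he5def, Prod.ext_iff]
      rw [hsm, map_smul, smul_eq_mul] at h3
      have h32 : (3/2*u : ℂ) ≠ 0 := by
        simp [hu0]
      exact (mul_eq_zero.1 h3).resolve_left h32
    have hcont : ContinuousAt (fun u : ℂ => fderiv ℂ H (u,0,0,0,0) e5) 0 := by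
      have h1 : ContinuousAt (fderiv ℂ H) ((0,0,0,0,0) : C5) := by
        have := (hD 0 h0V).continuousAt
        exact this
      have h2 : ContinuousAt (fun u : ℂ => ((u,0,0,0,0) : C5)) 0 := by fun_prop
      have h3 : ContinuousAt (fun u : ℂ => fderiv ℂ H (u,0,0,0,0)) 0 :=
        ContinuousAt.comp (g := fderiv ℂ H) h1 h2
      exact (ContinuousLinearMap.apply ℂ ℂ e5).continuous.continuousAt.comp h3
    have t1 : Tendsto (fun u : ℂ => fderiv ℂ H (u,0,0,0,0) e5) (𝓝[≠] (0:ℂ))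
        (𝓝 (fderiv ℂ H 0 e5)) := by
      exact hcont.continuousWithinAt (s := {(0:ℂ)}ᶜ)
    have t2 : Tendsto (fun u : ℂ => fderiv ℂ H (u,0,0,0,0) e5) (𝓝[≠] (0:ℂ)) (𝓝 0) := by
      apply tendsto_const_nhds.congr'
      filter_upwards [self_mem_nhdsWithin,
        nhdsWithin_le_nhds (Metric.ball_mem_nhds (0:ℂ) hε)] with u hu1 hu2
      exact (hvanish u (mem_ball_zero_iff.1 hu2) hu1).symm
    exact tendsto_nhds_unique t1 t2
  -- the kernel relation on the curve (0, v², 0, v³, 0)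
  have hker : ∀ v : ℂ, ‖v‖ < ε → v ≠ 0 →
      2 * fderiv ℂ H (0, v^2, 0, v^3, 0) e2 + 3 * v * fderiv ℂ H (0, v^2, 0, v^3, 0) e4 = 0 := by
    intro v hv hv0
    have hw : (((0:ℂ), v^2, 0, v^3, 0) : C5) ∈ V := by
      have := (key 0 v hε0 hv).2
      simpa [F0] using this
    have hHw : HasFDerivAt H (fderiv ℂ H (0, v^2, 0, v^3, 0)) (((0:ℂ), v^2, 0, v^3, 0) : C5) :=
      (hH _ hw).differentiableAt.hasFDerivAt
    have c2 : HasDerivAt (fun x : ℂ => x^2) (2*v) v := by simpa using hasDerivAt_pow 2 v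
    have c3 : HasDerivAt (fun x : ℂ => x^3) (3*v^2) v := by simpa using hasDerivAt_pow 3 v
    have hc : HasDerivAt (fun x : ℂ => (((0:ℂ), x^2, 0, x^3, 0) : C5))
        ((0, 2*v, 0, 3*v^2, 0) : C5) v :=
      (hasDerivAt_const _ _).prodMk (c2.prodMk ((hasDerivAt_const _ _).prodMk
        (c3.prodMk (hasDerivAt_const _ _))))
    have h1 : HasDerivAt (fun x : ℂ => H ((0:ℂ), x^2, 0, x^3, 0))
        (fderiv ℂ H (0, v^2, 0, v^3, 0) ((0, 2*v, 0, 3*v^2, 0) : C5)) v :=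
      hHw.comp_hasDerivAt v hc
    have h2 : HasDerivAt (fun x : ℂ => H ((0:ℂ), x^2, 0, x^3, 0)) 0 v := by
      apply (hasDerivAt_const v (0:ℂ)).congr_of_eventuallyEq
      filter_upwards [Metric.isOpen_ball.mem_nhds (mem_ball_zero_iff.2 hv)] with x hx
      have := (key 0 x hε0 (mem_ball_zero_iff.1 hx)).1
      simpa [F0] using this
    have h3 : fderiv ℂ H (0, v^2, 0, v^3, 0) ((0, 2*v, 0, 3*v^2, 0) : C5) = 0 := h1.unique h2
    have hsm : ((0, 2*v, 0, 3*v^2, 0) : C5) = (2*v) • e2 + (3*v^2) • e4 := by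
      simp [he2def, he4def, Prod.ext_iff]
    rw [hsm, map_add, map_smul, map_smul, smul_eq_mul, smul_eq_mul] at h3
    apply mul_left_cancel₀ hv0
    rw [mul_zero]
    linear_combination h3
  have hcontc : ∀ e : C5, ContinuousAt (fun v : ℂ => fderiv ℂ H (0, v^2, 0, v^3, 0) e) 0 := by
    intro e
    have h1 : ContinuousAt (fderiv ℂ H) (((0:ℂ), (0:ℂ)^2, (0:ℂ), (0:ℂ)^3, (0:ℂ)) : C5) := by
      rw [hpt0]; exact (hD 0 h0V).continuousAt
    have h2 : ContinuousAt (fun v : ℂ => (((0:ℂ), v^2, 0, v^3, 0) : C5)) 0 := by fun_prop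
    have h3 : ContinuousAt (fun v : ℂ => fderiv ℂ H ((0:ℂ), v^2, 0, v^3, 0)) 0 :=
      ContinuousAt.comp (g := fderiv ℂ H) h1 h2
    exact (ContinuousLinearMap.apply ℂ ℂ e).continuous.continuousAt.comp h3
  -- Step b :  L e₂ = 0
  have hb : fderiv ℂ H 0 e2 = 0 := by
    have t1 : Tendsto (fun v : ℂ =>
        2 * fderiv ℂ H (0, v^2, 0, v^3, 0) e2 + 3 * v * fderiv ℂ H (0, v^2, 0, v^3, 0) e4)
        (𝓝[≠] (0:ℂ)) (𝓝 (2 * fderiv ℂ H 0 e2)) := by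
      have hc : ContinuousAt (fun v : ℂ =>
          2 * fderiv ℂ H (0, v^2, 0, v^3, 0) e2 + 3 * v * fderiv ℂ H (0, v^2, 0, v^3, 0) e4) 0 := by
        exact ((hcontc e2).const_mul 2).add ((continuousAt_id.const_mul 3).mul (hcontc e4))
      have h : Tendsto (fun v : ℂ =>
          2 * fderiv ℂ H (0, v^2, 0, v^3, 0) e2 + 3 * v * fderiv ℂ H (0, v^2, 0, v^3, 0) e4)
          (𝓝[≠] (0:ℂ)) (𝓝 (2 * fderiv ℂ H ((0:ℂ), (0:ℂ)^2, (0:ℂ), (0:ℂ)^3, (0:ℂ)) e2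
            + 3 * (0:ℂ) * fderiv ℂ H ((0:ℂ), (0:ℂ)^2, (0:ℂ), (0:ℂ)^3, (0:ℂ)) e4)) :=
        hc.continuousWithinAt (s := {(0:ℂ)}ᶜ)
      convert h using 2
      rw [hpt0]; ring
    have t2 : Tendsto (fun v : ℂ =>
        2 * fderiv ℂ H (0, v^2, 0, v^3, 0) e2 + 3 * v * fderiv ℂ H (0, v^2, 0, v^3, 0) e4)
        (𝓝[≠] (0:ℂ)) (𝓝 0) := by
      apply tendsto_const_nhds.congr'
      filter_upwards [self_mem_nhdsWithin,
        nhdsWithin_le_nhds (Metric.ball_mem_nhds (0:ℂ) hε)] with v hv1 hv2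
      exact (hker v (mem_ball_zero_iff.1 hv2) hv1).symm
    have := tendsto_nhds_unique t1 t2
    have h2 : (2:ℂ) ≠ 0 := two_ne_zero
    exact (mul_eq_zero.1 this).resolve_left h2
  -- Step d :  L e₄ = 0
  have hd : fderiv ℂ H 0 e4 = 0 := by
    -- χ(v) = D(γ v) e₂ has derivative 0 at 0 and χ 0 = 0
    have hχa : AnalyticAt ℂ (fun w : C5 => fderiv ℂ H w e2) 0 :=
      ((ContinuousLinearMap.apply ℂ ℂ e2).analyticAt _).comp (hD 0 h0V)
    have hχf : HasFDerivAt (fun w : C5 => fderiv ℂ H w e2)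
        (fderiv ℂ (fun w : C5 => fderiv ℂ H w e2) 0)
        (((0:ℂ), (0:ℂ)^2, (0:ℂ), (0:ℂ)^3, (0:ℂ)) : C5) := by
      rw [hpt0]; exact hχa.differentiableAt.hasFDerivAt
    have c2 : HasDerivAt (fun v : ℂ => v^2) 0 0 := by simpa using hasDerivAt_pow 2 (0:ℂ)
    have c3 : HasDerivAt (fun v : ℂ => v^3) 0 0 := by simpa using hasDerivAt_pow 3 (0:ℂ)
    have hγ : HasDerivAt (fun v : ℂ => (((0:ℂ), v^2, 0, v^3, 0) : C5)) ((0,0,0,0,0) : C5) 0 :=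
      (hasDerivAt_const _ _).prodMk (c2.prodMk ((hasDerivAt_const _ _).prodMk
        (c3.prodMk (hasDerivAt_const _ _))))
    have hχd : HasDerivAt (fun v : ℂ => fderiv ℂ H (0, v^2, 0, v^3, 0) e2) 0 0 := by
      have := hχf.comp_hasDerivAt 0 hγ
      have hz : ((0,0,0,0,0) : C5) = 0 := by norm_num
      rw [hz, map_zero] at this
      exact this
    have hχ0 : fderiv ℂ H ((0:ℂ), (0:ℂ)^2, (0:ℂ), (0:ℂ)^3, (0:ℂ)) e2 = 0 := by
      rw [hpt0]; exact hb
    have tslope := hasDerivAt_iff_tendsto_slope.1 hχd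
    have t2 : Tendsto (fun v : ℂ => fderiv ℂ H (0, v^2, 0, v^3, 0) e4) (𝓝[≠] (0:ℂ)) (𝓝 0) := by
      have tsc : Tendsto (fun v : ℂ => (-(2:ℂ)/3) *
          slope (fun v : ℂ => fderiv ℂ H (0, v^2, 0, v^3, 0) e2) 0 v) (𝓝[≠] (0:ℂ)) (𝓝 0) := by
        have := tslope.const_mul (-(2:ℂ)/3)
        simpa using this
      apply tsc.congr'
      filter_upwards [self_mem_nhdsWithin,
        nhdsWithin_le_nhds (Metric.ball_mem_nhds (0:ℂ) hε)] with v hv1 hv2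
      have hkv := hker v (mem_ball_zero_iff.1 hv2) hv1
      have hv0 : v ≠ 0 := hv1
      have hχv : fderiv ℂ H (0, v^2, 0, v^3, 0) e2
          = -3/2 * v * fderiv ℂ H (0, v^2, 0, v^3, 0) e4 := by
        linear_combination hkv / 2
      rw [slope_def_field, hχ0, sub_zero, sub_zero, hχv]
      field_simp
    have t1 : Tendsto (fun v : ℂ => fderiv ℂ H (0, v^2, 0, v^3, 0) e4) (𝓝[≠] (0:ℂ))
        (𝓝 (fderiv ℂ H 0 e4)) := by
      have h : Tendsto (fun v : ℂ => fderiv ℂ H (0, v^2, 0, v^3, 0) e4) (𝓝[≠] (0:ℂ))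
          (𝓝 (fderiv ℂ H ((0:ℂ), (0:ℂ)^2, (0:ℂ), (0:ℂ)^3, (0:ℂ)) e4)) :=
        (hcontc e4).continuousWithinAt (s := {(0:ℂ)}ᶜ)
      convert h using 2
      rw [hpt0]
    exact tendsto_nhds_unique t1 t2
  -- assemble
  have main : ∀ w : C5, fderiv ℂ H 0 w = fderiv ℂ H 0 ((0,0,1,0,0) : C5) * w.2.2.1 := by
    intro w
    obtain ⟨w1, w2, w3, w4, w5⟩ := w
    have hw : ((w1, w2, w3, w4, w5) : C5) = w1 • ((1,0,0,0,0) : C5) + w2 • e2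
        + w3 • ((0,0,1,0,0) : C5) + w4 • e4 + w5 • e5 := by
      simp [he2def, he4def, he5def, Prod.ext_iff]
    conv_lhs => rw [hw]
    simp only [map_add, map_smul, ha, hb, hd, he5, smul_eq_mul]
    ring
  refine ⟨?_, fderiv ℂ H 0 ((0,0,1,0,0) : C5), ?_, main⟩
  · have hC : fderiv ℂ H 0 ((0,0,1,0,0) : C5) ≠ 0 := by
      intro h0
      apply hne
      refine ContinuousLinearMap.ext fun w => ?_
      rw [main w, h0, zero_mul]
      rfl
    ext w
    simp only [Set.mem_setOf_eq, main w, mul_eq_zero]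
    tauto
  · intro h0
    apply hne
    refine ContinuousLinearMap.ext fun w => ?_
    rw [main w, h0, zero_mul]
    rfl
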